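/- arXiv:2112.09777 — 3 statements merged into one kernel-verified Lean document; each statement's English description precedes it below -/
import Mathlib

section
/- Let T = (a,b) × (c,d) ⊂ ℝ² with a < b and c < d, let F₁,…,F₄ denote its four closed edges with outward unit normals n₁,…,n₄, let k ≥ 0 be an integer and t ∈ {k, k+1}. Let v : ℝ² → ℝ be continuously differentiable. Denote by π_T^t v the L²(T)-orthogonal projection of v onto the space of bivariate polynomials of total degree at most t, and for each edge F_i by π_{F_i}^k v the L²(F_i)-orthogonal projection (in the arclength parameter) of v restricted to F_i onto univariate polynomials of degree at most k. Then for every bivariate polynomial w of total degree at most k+1: ∫_T ∇(π_T^t v)·∇w dx + Σ_{i=1}^{4} ∫_{F_i} ( π_{F_i}^k v − π_T^t v ) (∇w · n_i) dσ = ∫_T ∇v·∇w dx. Consequently the HHO potential reconstruction applied to the local interpolate of v is the elliptic projection of v: its gradient is L²(T)-orthogonal to gradients of polynomials of degree k+1 with respect to v, and its mean over T equals that of v. -/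
/-!
Green's formula on `T` for `v - P` against `w` gives
`∫_T ∇(v - P)·∇w = Σ_F ∫_F (v - P) (∇w·n_F) - ∫_T (v - P) Δw`.
Since `Δw` has degree `≤ k - 1 ≤ t`, the volume term vanishes by the orthogonality defining `P`;
on each edge `∇w·n_F` restricts to a polynomial of degree `≤ k`, so `v` may be replaced there by
its edge projection `π_F v`.
-/

open MeasureTheory MvPolynomial Set

namespace MvPolynomial

variable {σ R : Type*}

noncomputable def laplacian [Fintype σ] [CommSemiring R] (p : MvPolynomial σ R) :
    MvPolynomial σ R :=
  ∑ i, pderiv i (pderiv i p)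

theorem totalDegree_pderiv_le [CommSemiring R] (i : σ) (p : MvPolynomial σ R) :
    (pderiv i p).totalDegree ≤ p.totalDegree - 1 := by
  classical
  conv_lhs => rw [p.as_sum, map_sum]
  refine totalDegree_finsetSum_le fun m hm => ?_
  rw [pderiv_monomial]
  by_cases hmi : m i = 0
  · simp [hmi]
  have hdeg : (m - Finsupp.single i 1).degree + 1 = m.degree := by
    nth_rw 2 [← Finsupp.degree_single i 1]
    rw [← map_add, tsub_add_cancel_of_le]
    exact Finsupp.single_le_iff.mpr (Nat.one_le_iff_ne_zero.mpr hmi)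
  have hm' : m.degree ≤ p.totalDegree := le_totalDegree hm
  refine (totalDegree_monomial_le _ _).trans ?_
  change (m - Finsupp.single i 1).degree ≤ _
  omega

theorem totalDegree_laplacian_le [Fintype σ] [CommSemiring R] (p : MvPolynomial σ R) :
    (laplacian p).totalDegree ≤ p.totalDegree - 2 :=
  totalDegree_finsetSum_le fun i _ =>
    (totalDegree_pderiv_le i _).trans <| by have := totalDegree_pderiv_le i p; omega

theorem natDegree_aeval_le_totalDegree [CommSemiring R] (f : σ → Polynomial R)
    (hf : ∀ i, (f i).natDegree ≤ 1) (p : MvPolynomial σ R) :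
    (aeval f p).natDegree ≤ p.totalDegree := by
  classical
  conv_lhs => rw [p.as_sum, map_sum]
  refine Polynomial.natDegree_sum_le_of_forall_le _ _ fun m hm => ?_
  rw [aeval_monomial, ← Polynomial.C_eq_algebraMap]
  refine Polynomial.natDegree_C_mul_le _ _ |>.trans <| Polynomial.natDegree_prod_le _ _ |>.trans ?_
  refine le_trans ?_ (le_totalDegree hm)
  exact Finset.sum_le_sum fun i _ => Polynomial.natDegree_pow_le_of_le _ (hf i) |>.trans (by simp)

theorem polynomial_eval_aeval [CommSemiring R] (f : σ → Polynomial R) (p : MvPolynomial σ R)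
    (s : R) : (aeval f p).eval s = eval (fun i => (f i).eval s) p := by
  rw [← Polynomial.coe_aeval_eq_eval, ← AlgHom.comp_apply, comp_aeval]
  simp [aeval_eq_eval]

theorem exists_natDegree_le_eval_line [CommSemiring R] (p : MvPolynomial σ R) (x u : σ → R) :
    ∃ q : Polynomial R, q.natDegree ≤ p.totalDegree ∧ ∀ s, q.eval s = eval (x + s • u) p := by
  refine ⟨aeval (fun i => Polynomial.C (u i) * Polynomial.X + Polynomial.C (x i)) p,
    natDegree_aeval_le_totalDegree _ (fun _ => Polynomial.natDegree_linear_le) p, fun s => ?_⟩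
  have hline : (fun i => (Polynomial.C (u i) * Polynomial.X + Polynomial.C (x i)).eval s)
      = x + s • u := by
    funext i
    simp only [Polynomial.eval_add, Polynomial.eval_mul, Polynomial.eval_C, Polynomial.eval_X,
      Pi.add_apply, Pi.smul_apply, smul_eq_mul]
    ring
  rw [polynomial_eval_aeval, hline]

variable {𝕜 : Type*} [Fintype σ] [NontriviallyNormedField 𝕜]

theorem hasFDerivAt_eval (p : MvPolynomial σ 𝕜) (x : σ → 𝕜) :
    HasFDerivAt (fun y => eval y p)
      (∑ i, eval x (pderiv i p) • (ContinuousLinearMap.proj i : (σ → 𝕜) →L[𝕜] 𝕜)) x := by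
  classical
  induction p using MvPolynomial.induction_on with
  | C r =>
    simp only [eval_C]
    refine (hasFDerivAt_const r x).congr_fderiv ?_
    ext
    simp
  | add p q hp hq =>
    simp only [map_add]
    refine (hp.add hq).congr_fderiv ?_
    ext
    simp [add_mul, Finset.sum_add_distrib]
  | mul_X p i hp =>
    simp only [map_mul, eval_X]
    refine (hp.mul (hasFDerivAt_apply i x)).congr_fderiv ?_
    ext j
    simp [pderiv_X, Pi.single_apply, Finset.mul_sum, apply_ite, add_mul, ite_mul,
      Finset.sum_add_distrib, mul_assoc]

theorem contDiff_eval {n : WithTop ℕ∞} (p : MvPolynomial σ 𝕜) :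
    ContDiff 𝕜 n fun x => eval x p := by
  induction p using MvPolynomial.induction_on with
  | C r => simpa using contDiff_const
  | add p q hp hq => simpa using hp.add hq
  | mul_X p i hp => simpa using hp.mul (contDiff_apply 𝕜 𝕜 i)

theorem fderiv_eval_single [DecidableEq σ] (p : MvPolynomial σ 𝕜) (x : σ → 𝕜) (i : σ) :
    fderiv 𝕜 (fun y => eval y p) x (Pi.single i 1) = eval x (pderiv i p) := by
  simp [(hasFDerivAt_eval p x).fderiv, Pi.single_apply]

end MvPolynomial

theorem setIntegral_rect_eq_setIntegral_Icc (f : (Fin 2 → ℝ) → ℝ) (a b c d : ℝ) :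
    ∫ x in {x : Fin 2 → ℝ | x 0 ∈ Ioo a b ∧ x 1 ∈ Ioo c d}, f x
      = ∫ p in Icc (a, c) (b, d), f ![p.1, p.2] := by
  have hpre : MeasurableEquiv.finTwoArrow.symm ⁻¹' {x : Fin 2 → ℝ | x 0 ∈ Ioo a b ∧ x 1 ∈ Ioo c d}
      = Ioo a b ×ˢ Ioo c d := by
    ext p; simp
  rw [← (volume_preserving_finTwoArrow ℝ).symm.setIntegral_preimage_emb
    (MeasurableEquiv.measurableEmbedding _), hpre, ← Icc_prod_Icc, Measure.volume_eq_prod,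
    setIntegral_congr_set (Measure.set_prod_ae_eq Ioo_ae_eq_Icc Ioo_ae_eq_Icc)]
  simp

theorem integral_rect_divergence {f g : (Fin 2 → ℝ) → ℝ} (hf : ContDiff ℝ 1 f)
    (hg : ContDiff ℝ 1 g) {a b c d : ℝ} (hab : a ≤ b) (hcd : c ≤ d) :
    ∫ x in {x : Fin 2 → ℝ | x 0 ∈ Ioo a b ∧ x 1 ∈ Ioo c d},
        (fderiv ℝ f x (Pi.single 0 1) + fderiv ℝ g x (Pi.single 1 1))
      = (∫ x in a..b, g ![x, d]) - (∫ x in a..b, g ![x, c])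
        + (∫ y in c..d, f ![b, y]) - ∫ y in c..d, f ![a, y] := by
  let ι : (ℝ × ℝ) ≃L[ℝ] (Fin 2 → ℝ) := (ContinuousLinearEquiv.finTwoArrow ℝ ℝ).symm
  have hι : ∀ p : ℝ × ℝ, ι p = ![p.1, p.2] := fun p => by simp [ι]
  have hderiv {h : (Fin 2 → ℝ) → ℝ} (hh : ContDiff ℝ 1 h) (p : ℝ × ℝ) :
      HasFDerivAt (h ∘ ι) ((fderiv ℝ h (ι p)).comp (ι : (ℝ × ℝ) →L[ℝ] (Fin 2 → ℝ))) p :=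
    (hh.differentiable one_ne_zero _).hasFDerivAt.comp p ι.hasFDerivAt
  have hcont {h : (Fin 2 → ℝ) → ℝ} (hh : ContDiff ℝ 1 h) (e : Fin 2 → ℝ) :
      Continuous fun p => fderiv ℝ h (ι p) e :=
    ((hh.continuous_fderiv one_ne_zero).clm_apply continuous_const).comp ι.continuous
  rw [setIntegral_rect_eq_setIntegral_Icc]
  have hdiv := integral_divergence_prod_Icc_of_hasFDerivAt_of_le (f ∘ ι) (g ∘ ι) _ _ (a, c) (b, d)
    ⟨hab, hcd⟩ (hf.continuous.comp ι.continuous).continuousOn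
    (hg.continuous.comp ι.continuous).continuousOn (fun p _ => hderiv hf p)
    (fun p _ => hderiv hg p)
    (((hcont hf _).add (hcont hg _)).continuousOn.integrableOn_compact isCompact_Icc)
  have he₀ : (Pi.single 0 1 : Fin 2 → ℝ) = ![1, 0] := by ext i; fin_cases i <;> simp
  have he₁ : (Pi.single 1 1 : Fin 2 → ℝ) = ![0, 1] := by ext i; fin_cases i <;> simp
  simpa [hι, he₀, he₁] using hdiv

attribute [local fun_prop] MvPolynomial.continuous_eval

theorem integrableOn_rect {f : (Fin 2 → ℝ) → ℝ} (hf : Continuous f) (a b c d : ℝ) :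
    IntegrableOn f {x : Fin 2 → ℝ | x 0 ∈ Ioo a b ∧ x 1 ∈ Ioo c d} := by
  refine (hf.continuousOn.integrableOn_compact
    (isCompact_Icc (a := ![a, c]) (b := ![b, d]))).mono_set ?_
  rintro x ⟨hx₀, hx₁⟩
  constructor <;> intro i <;> fin_cases i <;> simp [hx₀.1.le, hx₀.2.le, hx₁.1.le, hx₁.2.le]

theorem integral_rect_green {u : (Fin 2 → ℝ) → ℝ} (hu : ContDiff ℝ 1 u)
    (w : MvPolynomial (Fin 2) ℝ) {a b c d : ℝ} (hab : a ≤ b) (hcd : c ≤ d) :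
    (∫ x in {x : Fin 2 → ℝ | x 0 ∈ Ioo a b ∧ x 1 ∈ Ioo c d},
        ∑ i : Fin 2, fderiv ℝ u x (Pi.single i 1) * eval x (pderiv i w))
      + (∫ x in {x : Fin 2 → ℝ | x 0 ∈ Ioo a b ∧ x 1 ∈ Ioo c d}, u x * eval x (laplacian w))
      = (∫ x in a..b, u ![x, d] * eval ![x, d] (pderiv 1 w))
        - (∫ x in a..b, u ![x, c] * eval ![x, c] (pderiv 1 w))
        + (∫ y in c..d, u ![b, y] * eval ![b, y] (pderiv 0 w))
        - ∫ y in c..d, u ![a, y] * eval ![a, y] (pderiv 0 w) := by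
  have hflux (i : Fin 2) : ContDiff ℝ 1 fun x => u x * eval x (pderiv i w) :=
    hu.mul (contDiff_eval _)
  have hdiv (i : Fin 2) (x : Fin 2 → ℝ) :
      fderiv ℝ (fun x => u x * eval x (pderiv i w)) x (Pi.single i 1)
        = fderiv ℝ u x (Pi.single i 1) * eval x (pderiv i w)
          + u x * eval x (pderiv i (pderiv i w)) := by
    rw [fderiv_fun_mul (hu.differentiable one_ne_zero x)
      ((contDiff_eval (n := 1) _).differentiable one_ne_zero x)]
    simp only [add_apply, smul_apply, fderiv_eval_single,
      smul_eq_mul]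
    ring
  have hu' : Continuous (fderiv ℝ u) := hu.continuous_fderiv one_ne_zero
  have hu₀ : Continuous u := hu.continuous
  rw [← integral_add (integrableOn_rect (by fun_prop) a b c d)
      (integrableOn_rect (by fun_prop) a b c d),
    ← integral_rect_divergence (hflux 0) (hflux 1) hab hcd]
  refine integral_congr_ae (Filter.Eventually.of_forall fun x => ?_)
  simp only [hdiv, laplacian, Fin.sum_univ_two, map_add]
  ring

theorem integral_rect_green_sub_eval {v : (Fin 2 → ℝ) → ℝ} (hv : ContDiff ℝ 1 v)
    (P w : MvPolynomial (Fin 2) ℝ) {a b c d : ℝ} (hab : a ≤ b) (hcd : c ≤ d) :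
    (∫ x in {x : Fin 2 → ℝ | x 0 ∈ Ioo a b ∧ x 1 ∈ Ioo c d},
        ∑ i : Fin 2, fderiv ℝ v x (Pi.single i 1) * eval x (pderiv i w))
      - (∫ x in {x : Fin 2 → ℝ | x 0 ∈ Ioo a b ∧ x 1 ∈ Ioo c d},
        ∑ i : Fin 2, eval x (pderiv i P) * eval x (pderiv i w))
      + (∫ x in {x : Fin 2 → ℝ | x 0 ∈ Ioo a b ∧ x 1 ∈ Ioo c d},
        (v x - eval x P) * eval x (laplacian w))
      = (∫ x in a..b, (v ![x, d] - eval ![x, d] P) * eval ![x, d] (pderiv 1 w))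
        - (∫ x in a..b, (v ![x, c] - eval ![x, c] P) * eval ![x, c] (pderiv 1 w))
        + (∫ y in c..d, (v ![b, y] - eval ![b, y] P) * eval ![b, y] (pderiv 0 w))
        - ∫ y in c..d, (v ![a, y] - eval ![a, y] P) * eval ![a, y] (pderiv 0 w) := by
  have hgrad (x : Fin 2 → ℝ) (i : Fin 2) :
      fderiv ℝ (fun x => v x - eval x P) x (Pi.single i 1)
        = fderiv ℝ v x (Pi.single i 1) - eval x (pderiv i P) := by
    rw [fderiv_fun_sub (hv.differentiable one_ne_zero x)
      ((contDiff_eval (n := 1) P).differentiable one_ne_zero x)]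
    simp [fderiv_eval_single]
  have hv' : Continuous (fderiv ℝ v) := hv.continuous_fderiv one_ne_zero
  rw [← integral_sub (integrableOn_rect (by fun_prop) a b c d)
    (integrableOn_rect (by fun_prop) a b c d)]
  simpa only [hgrad, ← Finset.sum_sub_distrib, ← sub_mul]
    using integral_rect_green (hv.sub (contDiff_eval P)) w hab hcd

theorem integral_sub_mul_eval_eq_of_orthogonal {σ : Type*} {k : ℕ} {c d : ℝ} {γ : ℝ → σ → ℝ}
    (x u : σ → ℝ) (hγ : ∀ s, γ s = x + s • u) {v : (σ → ℝ) → ℝ} (hv : Continuous v)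
    {π : Polynomial ℝ}
    (hπ : ∀ q : Polynomial ℝ, q.natDegree ≤ k →
      ∫ s in (0:ℝ)..(d - c), (v (γ (c + s)) - π.eval s) * q.eval s = 0)
    (P g : MvPolynomial σ ℝ) (hg : g.totalDegree ≤ k) :
    ∫ y in c..d, (v (γ y) - eval (γ y) P) * eval (γ y) g
      = ∫ s in (0:ℝ)..(d - c), (π.eval s - eval (γ (c + s)) P) * eval (γ (c + s)) g := by
  obtain ⟨q, hqdeg, hq⟩ := exists_natDegree_le_eval_line g (x + c • u) u
  have hqγ (s : ℝ) : q.eval s = eval (γ (c + s)) g := by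
    rw [hq, hγ, add_smul, add_assoc]
  have hγc : Continuous γ := by
    rw [show γ = fun s => x + s • u from funext hγ]
    fun_prop
  calc ∫ y in c..d, (v (γ y) - eval (γ y) P) * eval (γ y) g
      = ∫ s in (0:ℝ)..(d - c), (v (γ (c + s)) - eval (γ (c + s)) P) * eval (γ (c + s)) g := by
        simp [intervalIntegral.integral_comp_add_left
          (fun y => (v (γ y) - eval (γ y) P) * eval (γ y) g)]
    _ = (∫ s in (0:ℝ)..(d - c), (v (γ (c + s)) - π.eval s) * q.eval s)
        + ∫ s in (0:ℝ)..(d - c), (π.eval s - eval (γ (c + s)) P) * eval (γ (c + s)) g := by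
        rw [← intervalIntegral.integral_add (Continuous.intervalIntegrable (by fun_prop) _ _)
          (Continuous.intervalIntegrable (by fun_prop) _ _)]
        congr 1
        ext s
        rw [hqγ]
        ring
    _ = _ := by rw [hπ q (hqdeg.trans hg), zero_add]

/-- `πB, πR, πT', πL` are the projections on the bottom, right, top and left edges, each
parametrised by arclength from its lower or left endpoint. -/
theorem stmt_6_general (k t : ℕ) (ht : t = k ∨ t = k + 1)
    (a b c d : ℝ) (hab : a < b) (hcd : c < d)
    (v : (Fin 2 → ℝ) → ℝ) (hv : ContDiff ℝ 1 v)
    (P : MvPolynomial (Fin 2) ℝ)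
    (hPproj : ∀ r : MvPolynomial (Fin 2) ℝ, r.totalDegree ≤ t →
      ∫ x in {x : Fin 2 → ℝ | x 0 ∈ Set.Ioo a b ∧ x 1 ∈ Set.Ioo c d},
        (v x - eval x P) * eval x r = 0)
    (πB : Polynomial ℝ)
    (hπB : ∀ q : Polynomial ℝ, q.natDegree ≤ k →
      ∫ s in (0:ℝ)..(b - a), (v ![a + s, c] - πB.eval s) * q.eval s = 0)
    (πR : Polynomial ℝ)
    (hπR : ∀ q : Polynomial ℝ, q.natDegree ≤ k →
      ∫ s in (0:ℝ)..(d - c), (v ![b, c + s] - πR.eval s) * q.eval s = 0)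
    (πT' : Polynomial ℝ)
    (hπT : ∀ q : Polynomial ℝ, q.natDegree ≤ k →
      ∫ s in (0:ℝ)..(b - a), (v ![a + s, d] - πT'.eval s) * q.eval s = 0)
    (πL : Polynomial ℝ)
    (hπL : ∀ q : Polynomial ℝ, q.natDegree ≤ k →
      ∫ s in (0:ℝ)..(d - c), (v ![a, c + s] - πL.eval s) * q.eval s = 0) :
    ∀ w : MvPolynomial (Fin 2) ℝ, w.totalDegree ≤ k + 1 →
      (∫ x in {x : Fin 2 → ℝ | x 0 ∈ Set.Ioo a b ∧ x 1 ∈ Set.Ioo c d},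
          ∑ i : Fin 2, eval x (pderiv i P) * eval x (pderiv i w))
      + ((∫ s in (0:ℝ)..(b - a),
            (πB.eval s - eval ![a + s, c] P) * (-(eval ![a + s, c] (pderiv (1 : Fin 2) w))))
        + (∫ s in (0:ℝ)..(d - c),
            (πR.eval s - eval ![b, c + s] P) * (eval ![b, c + s] (pderiv (0 : Fin 2) w)))
        + (∫ s in (0:ℝ)..(b - a),
            (πT'.eval s - eval ![a + s, d] P) * (eval ![a + s, d] (pderiv (1 : Fin 2) w)))
        + (∫ s in (0:ℝ)..(d - c),
            (πL.eval s - eval ![a, c + s] P) * (-(eval ![a, c + s] (pderiv (0 : Fin 2) w)))))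
      = ∫ x in {x : Fin 2 → ℝ | x 0 ∈ Set.Ioo a b ∧ x 1 ∈ Set.Ioo c d},
          ∑ i : Fin 2, (fderiv ℝ v x) (Pi.single i 1) * eval x (pderiv i w) := by
  intro w hw
  have hΔ : (laplacian w).totalDegree ≤ t := by
    have := totalDegree_laplacian_le w
    omega
  have hdeg (i : Fin 2) : (pderiv i w).totalDegree ≤ k := by
    have := totalDegree_pderiv_le i w
    omega
  have green := integral_rect_green_sub_eval hv P w hab.le hcd.le
  rw [hPproj _ hΔ, add_zero] at green
  have hB := integral_sub_mul_eval_eq_of_orthogonal (γ := fun x => ![x, c]) ![0, c] ![1, 0]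
    (fun s => by ext i; fin_cases i <;> simp) hv.continuous hπB P _ (hdeg 1)
  have hT := integral_sub_mul_eval_eq_of_orthogonal (γ := fun x => ![x, d]) ![0, d] ![1, 0]
    (fun s => by ext i; fin_cases i <;> simp) hv.continuous hπT P _ (hdeg 1)
  have hL := integral_sub_mul_eval_eq_of_orthogonal (γ := fun y => ![a, y]) ![a, 0] ![0, 1]
    (fun s => by ext i; fin_cases i <;> simp) hv.continuous hπL P _ (hdeg 0)
  have hR := integral_sub_mul_eval_eq_of_orthogonal (γ := fun y => ![b, y]) ![b, 0] ![0, 1]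
    (fun s => by ext i; fin_cases i <;> simp) hv.continuous hπR P _ (hdeg 0)
  beta_reduce at hB hT hL hR
  rw [hB, hT, hL, hR] at green
  simp only [mul_neg, intervalIntegral.integral_neg]
  linarith

/-- Elliptic-projection property of the HHO potential reconstruction on a rectangle
`T = (a,b) × (c,d)`: for a `C¹` function `v`, its `L²(T)`-projection `P` onto bivariate
polynomials of total degree at most `t` and its edge `L²`-projections `πB, πR, πT', πL`
onto univariate polynomials of degree at most `k` (bottom, right, top, left edges,
with outward normals `(0,-1), (1,0), (0,1), (-1,0)`) satisfy, for every bivariate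
polynomial `w` of total degree at most `k+1`,
`∫_T ∇P·∇w + Σ_F ∫_F (π_F v − P)(∇w·n_F) = ∫_T ∇v·∇w`. -/
theorem stmt_6 (k t : ℕ) (ht : t = k ∨ t = k + 1)
    (a b c d : ℝ) (hab : a < b) (hcd : c < d)
    (v : (Fin 2 → ℝ) → ℝ) (hv : ContDiff ℝ 1 v)
    (P : MvPolynomial (Fin 2) ℝ) (hPdeg : P.totalDegree ≤ t)
    (hPproj : ∀ r : MvPolynomial (Fin 2) ℝ, r.totalDegree ≤ t →
      ∫ x in {x : Fin 2 → ℝ | x 0 ∈ Set.Ioo a b ∧ x 1 ∈ Set.Ioo c d},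
        (v x - eval x P) * eval x r = 0)
    (πB : Polynomial ℝ) (hπBdeg : πB.natDegree ≤ k)
    (hπB : ∀ q : Polynomial ℝ, q.natDegree ≤ k →
      ∫ s in (0:ℝ)..(b - a), (v ![a + s, c] - πB.eval s) * q.eval s = 0)
    (πR : Polynomial ℝ) (hπRdeg : πR.natDegree ≤ k)
    (hπR : ∀ q : Polynomial ℝ, q.natDegree ≤ k →
      ∫ s in (0:ℝ)..(d - c), (v ![b, c + s] - πR.eval s) * q.eval s = 0)
    (πT' : Polynomial ℝ) (hπTdeg : πT'.natDegree ≤ k)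
    (hπT : ∀ q : Polynomial ℝ, q.natDegree ≤ k →
      ∫ s in (0:ℝ)..(b - a), (v ![a + s, d] - πT'.eval s) * q.eval s = 0)
    (πL : Polynomial ℝ) (hπLdeg : πL.natDegree ≤ k)
    (hπL : ∀ q : Polynomial ℝ, q.natDegree ≤ k →
      ∫ s in (0:ℝ)..(d - c), (v ![a, c + s] - πL.eval s) * q.eval s = 0) :
    ∀ w : MvPolynomial (Fin 2) ℝ, w.totalDegree ≤ k + 1 →
      (∫ x in {x : Fin 2 → ℝ | x 0 ∈ Set.Ioo a b ∧ x 1 ∈ Set.Ioo c d},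
          ∑ i : Fin 2, eval x (pderiv i P) * eval x (pderiv i w))
      + ((∫ s in (0:ℝ)..(b - a),
            (πB.eval s - eval ![a + s, c] P) * (-(eval ![a + s, c] (pderiv (1 : Fin 2) w))))
        + (∫ s in (0:ℝ)..(d - c),
            (πR.eval s - eval ![b, c + s] P) * (eval ![b, c + s] (pderiv (0 : Fin 2) w)))
        + (∫ s in (0:ℝ)..(b - a),
            (πT'.eval s - eval ![a + s, d] P) * (eval ![a + s, d] (pderiv (1 : Fin 2) w)))
        + (∫ s in (0:ℝ)..(d - c),
            (πL.eval s - eval ![a, c + s] P) * (-(eval ![a, c + s] (pderiv (0 : Fin 2) w)))))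
      = ∫ x in {x : Fin 2 → ℝ | x 0 ∈ Set.Ioo a b ∧ x 1 ∈ Set.Ioo c d},
          ∑ i : Fin 2, (fderiv ℝ v x) (Pi.single i 1) * eval x (pderiv i w) :=
  stmt_6_general k t ht a b c d hab hcd v hv P hPproj πB hπB πR hπR πT' hπT πL hπL
end

section
/- Let x₀ = (1/2, 1/2), write (x̃, ỹ) = (x − 1/2, y − 1/2) and r = (x̃² + ỹ²)^{1/2}. On the punctured plane {(x,y) ∈ ℝ² : r > 0}, the annular-region Gresho–Chan fields u(x,y) = (−2ỹ/r + 5ỹ, 2x̃/r − 5x̃) and p(x,y) = 4 ln(5r) + (25/2) r² − 20 r + 4 satisfy the steady incompressible Euler equations with zero body force: ∂u₁/∂x + ∂u₂/∂y = 0, u₁ ∂u₁/∂x + u₂ ∂u₁/∂y + ∂p/∂x = 0, and u₁ ∂u₂/∂x + u₂ ∂u₂/∂y + ∂p/∂y = 0 at every point with r > 0. -/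
/-!
The Gresho–Chan field is a circular flow `u = ω(r) (−ỹ, x̃)` with angular velocity
`ω(r) = 2/r − 5`. Every circular flow is divergence free, and its convective acceleration
`(u · ∇) u = −ω(r)² (x̃, ỹ)` is purely centripetal, so it solves the steady Euler equations
with a radial pressure `p = P(r)` exactly when `P'(r) = r ω(r)²`. Here
`P'(r) = 4/r + 25 r − 20 = r (2/r − 5)²`.
-/

namespace PlanarFlow

noncomputable def radius (a b x y : ℝ) : ℝ := √((x - a) ^ 2 + (y - b) ^ 2)

def IsSteadyEulerAt (u₁ u₂ p : ℝ → ℝ → ℝ) (x y : ℝ) : Prop :=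
  (deriv (fun x' => u₁ x' y) x + deriv (fun y' => u₂ x y') y = 0) ∧
  (u₁ x y * deriv (fun x' => u₁ x' y) x + u₂ x y * deriv (fun y' => u₁ x y') y
    + deriv (fun x' => p x' y) x = 0) ∧
  (u₁ x y * deriv (fun x' => u₂ x' y) x + u₂ x y * deriv (fun y' => u₂ x y') y
    + deriv (fun y' => p x y') y = 0)

variable {a b x y : ℝ}

lemma radius_swap (a b x y : ℝ) : radius a b x y = radius b a y x := by
  rw [radius, radius, add_comm]

lemma hasDerivAt_radius_fst (hr : 0 < radius a b x y) :
    HasDerivAt (fun x' => radius a b x' y) ((x - a) / radius a b x y) x := by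
  have hq : HasDerivAt (fun x' => (x' - a) ^ 2 + (y - b) ^ 2) (2 * (x - a)) x := by
    simpa using (((hasDerivAt_id x).sub_const a).pow 2).add_const ((y - b) ^ 2)
  refine (hq.sqrt (Real.sqrt_pos.mp hr).ne').congr_deriv ?_
  have hr' : √((x - a) ^ 2 + (y - b) ^ 2) ≠ 0 := hr.ne'
  unfold radius
  field_simp

lemma hasDerivAt_radius_snd (hr : 0 < radius a b x y) :
    HasDerivAt (fun y' => radius a b x y') ((y - b) / radius a b x y) y := by
  simp only [radius_swap a b x] at hr ⊢
  exact hasDerivAt_radius_fst hr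

lemma hasDerivAt_comp_radius_fst {g : ℝ → ℝ} {g' : ℝ}
    (hg : HasDerivAt g g' (radius a b x y)) (hr : 0 < radius a b x y) :
    HasDerivAt (fun x' => g (radius a b x' y)) (g' * ((x - a) / radius a b x y)) x :=
  hg.comp x (hasDerivAt_radius_fst hr)

lemma hasDerivAt_comp_radius_snd {g : ℝ → ℝ} {g' : ℝ}
    (hg : HasDerivAt g g' (radius a b x y)) (hr : 0 < radius a b x y) :
    HasDerivAt (fun y' => g (radius a b x y')) (g' * ((y - b) / radius a b x y)) y :=
  hg.comp y (hasDerivAt_radius_snd hr)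

theorem isSteadyEulerAt_circularFlow {ω P : ℝ → ℝ} {ω' : ℝ}
    (hr : 0 < radius a b x y) (hω : HasDerivAt ω ω' (radius a b x y))
    (hP : HasDerivAt P (radius a b x y * ω (radius a b x y) ^ 2) (radius a b x y)) :
    IsSteadyEulerAt (fun x y => -(y - b) * ω (radius a b x y))
      (fun x y => (x - a) * ω (radius a b x y)) (fun x y => P (radius a b x y)) x y := by
  have hsub (c t : ℝ) : HasDerivAt (fun t' => t' - c) 1 t := (hasDerivAt_id' t).sub_const c
  have hu₁x := ((hasDerivAt_comp_radius_fst hω hr).const_mul (-(y - b))).deriv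
  have hu₁y := (((hsub b y).fun_neg).fun_mul (hasDerivAt_comp_radius_snd hω hr)).deriv
  have hu₂x := ((hsub a x).fun_mul (hasDerivAt_comp_radius_fst hω hr)).deriv
  have hu₂y := ((hasDerivAt_comp_radius_snd hω hr).const_mul (x - a)).deriv
  have hpx := (hasDerivAt_comp_radius_fst hP hr).deriv
  have hpy := (hasDerivAt_comp_radius_snd hP hr).deriv
  have hρ : radius a b x y ≠ 0 := hr.ne'
  refine ⟨?_, ?_, ?_⟩ <;>
  · simp only [hu₁x, hu₁y, hu₂x, hu₂y, hpx, hpy]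
    field_simp
    ring

end PlanarFlow

open PlanarFlow

lemma hasDerivAt_greshoChan_pressure {s : ℝ} (hs : 0 < s) :
    HasDerivAt (fun s => 4 * Real.log (5 * s) + 25 / 2 * s ^ 2 - 20 * s + 4)
      (s * (2 / s - 5) ^ 2) s := by
  have h := ((((((hasDerivAt_id' s).const_mul 5).log (by positivity)).const_mul 4).fun_add
    ((hasDerivAt_pow 2 s).const_mul (25 / 2))).fun_sub
    ((hasDerivAt_id' s).const_mul 20)).add_const 4
  refine h.congr_deriv ?_
  field_simp
  ring

lemma hasDerivAt_greshoChan_angularVelocity {s : ℝ} (hs : s ≠ 0) :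
    HasDerivAt (fun s => 2 / s - 5) (-2 / s ^ 2) s :=
  (((hasDerivAt_const s 2).fun_div (hasDerivAt_id' s) hs).sub_const 5).congr_deriv (by ring)

/-- The annular-region Gresho–Chan fields `u = (−2ỹ/r + 5ỹ, 2x̃/r − 5x̃)`,
`p = 4 ln(5r) + (25/2)r² − 20r + 4`, with `(x̃,ỹ) = (x−1/2, y−1/2)` and
`r = √(x̃² + ỹ²)`, satisfy the steady incompressible Euler equations with zero body
force at every point of the punctured plane `r > 0`. -/
theorem stmt_11 :
    let r : ℝ → ℝ → ℝ := fun x y => Real.sqrt ((x - 1 / 2) ^ 2 + (y - 1 / 2) ^ 2)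
    let u₁ : ℝ → ℝ → ℝ := fun x y => -2 * (y - 1 / 2) / r x y + 5 * (y - 1 / 2)
    let u₂ : ℝ → ℝ → ℝ := fun x y => 2 * (x - 1 / 2) / r x y - 5 * (x - 1 / 2)
    let p : ℝ → ℝ → ℝ := fun x y =>
      4 * Real.log (5 * r x y) + 25 / 2 * (r x y) ^ 2 - 20 * r x y + 4
    ∀ x y : ℝ, 0 < r x y →
      (deriv (fun x' => u₁ x' y) x + deriv (fun y' => u₂ x y') y = 0) ∧
      (u₁ x y * deriv (fun x' => u₁ x' y) x + u₂ x y * deriv (fun y' => u₁ x y') y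
        + deriv (fun x' => p x' y) x = 0) ∧
      (u₁ x y * deriv (fun x' => u₂ x' y) x + u₂ x y * deriv (fun y' => u₂ x y') y
        + deriv (fun y' => p x y') y = 0) := by
  intro r u₁ u₂ p x y hr
  have hu₁ : u₁ = fun x y => -(y - 1 / 2) * (2 / radius (1 / 2) (1 / 2) x y - 5) := by
    funext x y
    simp only [u₁, r, radius]
    ring
  have hu₂ : u₂ = fun x y => (x - 1 / 2) * (2 / radius (1 / 2) (1 / 2) x y - 5) := by
    funext x y
    simp only [u₂, r, radius]
    ring
  rw [hu₁, hu₂]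
  exact isSteadyEulerAt_circularFlow hr (hasDerivAt_greshoChan_angularVelocity hr.ne')
    (hasDerivAt_greshoChan_pressure hr)
end

section
/- Let d ≥ 1, let u_T, u_{T'} ∈ ℝ^d, p_T, p_{T'} ∈ ℝ, n ∈ ℝ^d, and let s_T, s_{T'} ∈ ℝ with s_{T'} ≠ s_T. Define u_F = (s_{T'} u_T − s_T u_{T'})/(s_{T'} − s_T) and p_F = (s_{T'} p_T − s_T p_{T'})/(s_{T'} − s_T). If the normal component of the velocity is continuous, i.e., u_T·n = u_{T'}·n, then u_F·n = u_T·n and the HLL momentum flux reduces to the HHO-HLL numerical flux form: [ s_{T'}( u_T (u_T·n) + p_T n ) − s_T( u_{T'} (u_{T'}·n) + p_{T'} n ) ] / (s_{T'} − s_T) + ( s_{T'} s_T / (s_{T'} − s_T) ) ( u_{T'} − u_T ) = u_F (u_F·n) + p_F n + s_{T'} ( u_T − u_F ). -/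
open scoped RealInnerProductSpace

/-- If the normal velocity component is continuous, `u_T·n = u_{T'}·n`, then the
intermediate state satisfies `u_F·n = u_T·n` and the HLL momentum flux reduces to the
HHO-HLL numerical flux form `u_F (u_F·n) + p_F n + s_{T'}(u_T − u_F)`. -/
theorem stmt_17 (d : ℕ) (hd : 1 ≤ d)
    (uT uT' n : EuclideanSpace ℝ (Fin d)) (pT pT' : ℝ)
    (sT sT' : ℝ) (hs : sT' ≠ sT)
    (hcont : ⟪uT, n⟫ = ⟪uT', n⟫) :
    let uF : EuclideanSpace ℝ (Fin d) := (sT' - sT)⁻¹ • (sT' • uT - sT • uT')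
    let pF : ℝ := (sT' * pT - sT * pT') / (sT' - sT)
    ⟪uF, n⟫ = ⟪uT, n⟫ ∧
    (sT' - sT)⁻¹ • (sT' • (⟪uT, n⟫ • uT + pT • n) - sT • (⟪uT', n⟫ • uT' + pT' • n))
        + ((sT' * sT) / (sT' - sT)) • (uT' - uT)
      = ⟪uF, n⟫ • uF + pF • n + sT' • (uT - uF) := by
  intro uF pF
  have ha : sT' - sT ≠ 0 := sub_ne_zero.mpr hs
  have h1 : ⟪uF, n⟫ = ⟪uT, n⟫ := by
    simp only [uF, inner_smul_left, inner_sub_left, RCLike.conj_to_real, ← hcont]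
    field_simp
  refine ⟨h1, ?_⟩
  rw [h1, ← hcont]
  simp only [uF, pF]
  match_scalars
  all_goals field_simp
  all_goals try ring
  all_goals simp
end
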